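/- arXiv:2502.07767 — 2 statements merged into one kernel-verified Lean document; each statement's English description precedes it below -/
import Mathlib

section
/- In null metric hypersurface data (n^{(2)} = 0), the Lie derivative of P along n is L_n P^{ab} = −2(P^{ac} n^b + P^{bc} n^a) s_c − 2 P^{ac} P^{bd} U_{cd} − n^a n^b n(ℓ^{(2)}). -/
/-!
Substitute the expressions for `∇̊n` and `∇̊P` into
`L_n P^{ab} = n^c ∇̊_c P^{ab} − P^{cb} ∇̊_c n^a − P^{ac} ∇̊_c n^b`.
In the first term `n^c F_{cd} = s_d` turns the `F`-terms into `s`-terms; each of the other two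
contributes one `s`-term and one copy of `P^{ac} P^{bd} U_{cd}`, the copies agreeing because
`P` and `U` are symmetric.
-/

open Finset

section
variable {ι R : Type*} [Fintype ι] [CommRing R]

theorem contract_n_nablaP {P F : ι → ι → R} {DP : ι → ι → ι → R} {n s dℓ2 : ι → R}
    (hs : ∀ d, s d = ∑ c, n c * F c d)
    (hDP : ∀ c a b, DP c a b =
      -(∑ d, (n a * P b d + n b * P a d) * F c d) - n a * n b * dℓ2 c) (a b : ι) :
    ∑ c, n c * DP c a b =
      -(n a * ∑ d, P b d * s d) - n b * ∑ d, P a d * s d - n a * n b * ∑ c, n c * dℓ2 c := by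
  simp only [hDP, hs, mul_sub, mul_neg, mul_add, add_mul, mul_sum, sum_sub_distrib,
    sum_neg_distrib, sum_add_distrib]
  rw [sum_comm (f := fun c d => n c * (n a * P b d * F c d)),
    sum_comm (f := fun c d => n c * (n b * P a d * F c d))]
  simp only [mul_comm, mul_left_comm]
  ring

theorem contract_P_nablaN {P U Dn : ι → ι → R} {n s : ι → R}
    (hDn : ∀ a b, Dn a b = s a * n b + ∑ c, P b c * U c a) (a b : ι) :
    ∑ c, P a c * Dn c b = (∑ c, P a c * s c) * n b + ∑ c, ∑ d, P a c * P b d * U d c := by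
  simp only [hDn, mul_add, sum_add_distrib, sum_mul, mul_sum, mul_assoc]

end

/-- In null metric hypersurface data (`n2 = 0`) with dual `(P, n)`:
`Dn a b` represents `∇̊_a n^b = s_a n^b + P^{bc} U_{ca}`,
`DP c a b` represents `∇̊_c P^{ab} = −(n^a P^{bd} + n^b P^{ad})F_{cd}
− n^a n^b (dℓ2)_c`, `s_d = n^c F_{cd}`, and `LnP` represents `L_n P^{ab}`,
related to `∇̊` via `L_n P^{ab} = n^c ∇̊_c P^{ab} − P^{cb}∇̊_c n^a
− P^{ac}∇̊_c n^b`.  Conclusion: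
`L_n P^{ab} = −2(P^{ac}n^b + P^{bc}n^a)s_c − 2P^{ac}P^{bd}U_{cd}
− n^a n^b n(ℓ2)`. -/
theorem lie_n_P {ι : Type*} [Fintype ι]
    (P U F LnP Dn : ι → ι → ℝ) (DP : ι → ι → ι → ℝ) (n s dℓ2 : ι → ℝ)
    (hPsymm : ∀ a b, P a b = P b a)
    (hUsymm : ∀ a b, U a b = U b a)
    (hs : ∀ d, s d = ∑ c, n c * F c d)
    (hDn : ∀ a b, Dn a b = s a * n b + ∑ c, P b c * U c a)
    (hDP : ∀ c a b, DP c a b =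
      -(∑ d, (n a * P b d + n b * P a d) * F c d) - n a * n b * dℓ2 c)
    (hLnP : ∀ a b, LnP a b = (∑ c, n c * DP c a b)
      - (∑ c, P c b * Dn c a) - ∑ c, P a c * Dn c b) :
    ∀ a b, LnP a b =
      -2 * ((∑ c, P a c * s c) * n b + (∑ c, P b c * s c) * n a)
      - 2 * (∑ c, ∑ d, P a c * P b d * U c d)
      - n a * n b * (∑ c, n c * dℓ2 c) := by
  intro a b
  have hP : ∑ c, P c b * Dn c a = ∑ c, P b c * Dn c a :=
    sum_congr rfl fun c _ => by rw [hPsymm]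
  have hswap : ∑ c, ∑ d, P b c * P a d * U d c = ∑ c, ∑ d, P a c * P b d * U c d := by
    rw [sum_comm]
    exact sum_congr rfl fun c _ => sum_congr rfl fun d _ => by ring
  have hU : ∑ c, ∑ d, P a c * P b d * U d c = ∑ c, ∑ d, P a c * P b d * U c d :=
    sum_congr rfl fun c _ => sum_congr rfl fun d _ => by rw [hUsymm]
  rw [hLnP, hP, contract_n_nablaP hs hDP, contract_P_nablaN hDn, contract_P_nablaN hDn,
    hswap, hU]
  ring
end

section
/- Assume on a null hypersurface (n^{(2)}=0) that K = μγ for a constant μ. Then the contraction of the identity for Q with n gives Q_c n^c = −2 𝕊(n,n) + 2 L_n(𝔎(n) − μ) + (𝔎(n) − μ) tr_P U, starting from Q_c = −2𝕊_{ac}n^a + 2L_n 𝔎_c − 2P^{ab}U_{cb}𝔎_a + (2κ_n + tr_P U)𝔎_c + 2𝔎(n)(r−s)_c + P^{ab}∇̊_a K_{bc} − (1/2)P^{ab}∇̊_c K_{ab} + (tr_P Y − n(ℓ^{(2)}))K_{cd}n^d − 2P^{bd}(r+s)_b K_{dc}. -/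
/-!
Contract the formula for `Q` with `n`. Both terms carrying `K = μγ` with a free index die
because `γ(·,n) = 0`, and the terms `P^{ab}U_{cb}𝔎_a n^c` and `P^{ab}∇̊_c K_{ab} n^c` die because
`U(n,·) = 0`. Since `∇̊_a K_{bc} = μ(−ℓ_c U_{ab} − ℓ_b U_{ac})` and `ℓ(n) = 1`, the divergence term
gives `−μ tr_P U`. Finally `r(n) = −κ_n` and `s(n) = 0`, so `2𝔎(n)(r − s)(n)` cancels `2κ_n 𝔎(n)`.
-/

open Finset

section Contraction

variable {ι R : Type*} [Fintype ι] [CommRing R] {n : ι → R}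

theorem sum_sum_mul_eq_sum_sum (f : ι → ι → R) :
    ∑ c, (∑ a, f a c) * n c = ∑ a, ∑ c, f a c * n c := by
  simp only [sum_mul]
  exact sum_comm

theorem sum_sum_sum_mul_eq_sum_sum_sum (f : ι → ι → ι → R) :
    ∑ c, (∑ a, ∑ b, f a b c) * n c = ∑ a, ∑ b, ∑ c, f a b c * n c := by
  rw [sum_sum_mul_eq_sum_sum]
  exact sum_congr rfl fun a _ => sum_sum_mul_eq_sum_sum _

theorem contract_eq_zero_of_left_null {U : ι → ι → R} (hU : ∀ b, ∑ c, U c b * n c = 0)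
    (P : ι → ι → R) (v : ι → R) :
    ∑ c, (∑ a, ∑ b, P a b * U c b * v a) * n c = 0 := by
  rw [sum_sum_sum_mul_eq_sum_sum_sum]
  refine sum_eq_zero fun a _ => sum_eq_zero fun b _ => ?_
  calc ∑ c, P a b * U c b * v a * n c = P a b * v a * ∑ c, U c b * n c := by
        rw [mul_sum]; exact sum_congr rfl fun c _ => by ring
    _ = 0 := by rw [hU, mul_zero]

theorem contract_eq_zero_of_right_null {K : ι → ι → R} (hK : ∀ d, ∑ c, K d c * n c = 0)
    (P : ι → ι → R) (w : ι → R) :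
    ∑ c, (∑ b, ∑ d, P b d * w b * K d c) * n c = 0 := by
  rw [sum_sum_sum_mul_eq_sum_sum_sum]
  refine sum_eq_zero fun b _ => sum_eq_zero fun d _ => ?_
  calc ∑ c, P b d * w b * K d c * n c = P b d * w b * ∑ c, K d c * n c := by
        rw [mul_sum]; exact sum_congr rfl fun c _ => by ring
    _ = 0 := by rw [hK, mul_zero]

variable {DK : ι → ι → ι → R} {ℓ : ι → R} {U : ι → ι → R} {μ : R}

theorem contract_trace_divergence_eq
    (hDK : ∀ a b c, DK a b c = μ * (-(ℓ c * U a b) - ℓ b * U a c))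
    (hℓ : ∑ c, ℓ c * n c = 1) (hU : ∀ a, ∑ c, U a c * n c = 0) (P : ι → ι → R) :
    ∑ c, (∑ a, ∑ b, P a b * DK a b c) * n c = -μ * ∑ a, ∑ b, P a b * U a b := by
  simp only [sum_sum_sum_mul_eq_sum_sum_sum, mul_sum]
  refine sum_congr rfl fun a _ => sum_congr rfl fun b _ => ?_
  calc ∑ c, P a b * DK a b c * n c
      = -μ * P a b * U a b * (∑ c, ℓ c * n c) - μ * P a b * ℓ b * ∑ c, U a c * n c := by
        simp only [hDK, mul_sum, ← sum_sub_distrib]; exact sum_congr rfl fun c _ => by ring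
    _ = -μ * (P a b * U a b) := by rw [hℓ, hU]; ring

theorem contract_trace_gradient_eq_zero
    (hDK : ∀ a b c, DK a b c = μ * (-(ℓ c * U a b) - ℓ b * U a c))
    (hU : ∀ b, ∑ c, U c b * n c = 0) (P : ι → ι → R) :
    ∑ c, (∑ a, ∑ b, P a b * DK c a b) * n c = 0 := by
  rw [sum_sum_sum_mul_eq_sum_sum_sum]
  refine sum_eq_zero fun a _ => sum_eq_zero fun b _ => ?_
  calc ∑ c, P a b * DK c a b * n c
      = -μ * P a b * ℓ b * (∑ c, U c a * n c) - μ * P a b * ℓ a * ∑ c, U c b * n c := by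
        simp only [hDK, mul_sum, ← sum_sub_distrib]; exact sum_congr rfl fun c _ => by ring
    _ = 0 := by rw [hU, hU]; ring

end Contraction

/-- `Kf = 𝔎`, `DK a b c = ∇̊_a K_{bc}`, `Dγ a b c = ∇̊_a γ_{bc}`, `trPU = tr_P U`, `Kn = 𝔎(n)`,
`Snn = 𝕊(n,n)`, `LnKn = L_n(𝔎(n))`, `nℓ2 = n(ℓ^{(2)})`. -/
theorem null_Q_contraction_general {ι : Type*} [Fintype ι]
    (Q Kf LnKf r s ℓ n : ι → ℝ)
    (S P U γ K : ι → ι → ℝ) (DK Dγ : ι → ι → ι → ℝ)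
    (κ μ LnKn nℓ2 trPU trPY Kn Snn : ℝ)
    (hUsymm : ∀ a b, U a b = U b a)
    (htrPU : trPU = ∑ a, ∑ b, P a b * U a b)
    (hKn : Kn = ∑ a, Kf a * n a)
    (hSnn : Snn = ∑ a, ∑ c, S a c * n a * n c)
    (hLnKn : LnKn = ∑ c, n c * LnKf c)
    (hγn : ∀ a, (∑ b, γ a b * n b) = 0)
    (hUn : ∀ a, (∑ b, U a b * n b) = 0)
    (hsn : (∑ a, s a * n a) = 0)
    (hrn : (∑ a, r a * n a) = -κ)
    (hℓn : (∑ a, ℓ a * n a) = 1)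
    (hK : ∀ a b, K a b = μ * γ a b)
    (hDK : ∀ a b c, DK a b c = μ * Dγ a b c)
    (hDγ : ∀ a b c, Dγ a b c = -(ℓ c * U a b) - ℓ b * U a c)
    (hQ : ∀ c, Q c =
      -2 * (∑ a, S a c * n a) + 2 * LnKf c
      - 2 * (∑ a, ∑ b, P a b * U c b * Kf a)
      + (2 * κ + trPU) * Kf c + 2 * Kn * (r c - s c)
      + (∑ a, ∑ b, P a b * DK a b c)
      - (1/2) * (∑ a, ∑ b, P a b * DK c a b)
      + (trPY - nℓ2) * (∑ d, K c d * n d)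
      - 2 * (∑ b, ∑ d, P b d * (r b + s b) * K d c)) :
    (∑ c, Q c * n c) = -2 * Snn + 2 * LnKn + (Kn - μ) * trPU := by
  have hnU : ∀ b, ∑ c, U c b * n c = 0 := fun b => by simpa only [hUsymm] using hUn b
  have hKγ : ∀ d, ∑ c, K d c * n c = 0 := fun d => by
    simp only [hK, mul_assoc, ← mul_sum, hγn, mul_zero]
  have hDKU : ∀ a b c, DK a b c = μ * (-(ℓ c * U a b) - ℓ b * U a c) := fun a b c => by
    rw [hDK, hDγ]
  have hS : ∑ c, (∑ a, S a c * n a) * n c = Snn := by rw [hSnn, sum_sum_mul_eq_sum_sum]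
  have hL : ∑ c, LnKf c * n c = LnKn := by
    rw [hLnKn]; exact sum_congr rfl fun c _ => mul_comm _ _
  simp only [hQ, add_mul, sub_mul, sum_add_distrib, sum_sub_distrib, mul_assoc _ _ (n _), ← mul_sum]
  rw [hS, hL, ← hKn, hrn, hsn, contract_eq_zero_of_left_null hnU,
    contract_trace_divergence_eq hDKU hℓn hUn, ← htrPU, contract_trace_gradient_eq_zero hDKU hnU,
    contract_eq_zero_of_right_null hKγ]
  simp only [hKγ, zero_mul, sum_const_zero]
  ring

/-- Null hypersurface data (`n2 = 0`): `r = Y(n,·)`, `s = ((1/2)dℓ)(n,·)`,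
`κ = κ_n = −r(n)`, `U = (1/2)L_n γ` (so `U(n,·) = 0` and `s(n) = 0`),
`γ(n,·) = 0`, `ℓ(n) = 1`.  `K` (`𝒦_{ab}`), `Kf` (`𝔎_a`), `S` (`𝕊_{ab}`)
are the hypersurface-data components of an ambient deformation tensor and
`Q` is the tangential part of `𝒬`, given by the displayed formula `hQ`
(with `DK a b c = ∇̊_a K_{bc}`, `trPU = tr_P U`, `trPY = tr_P Y`,
`Kn = 𝔎(n)`, `Snn = 𝕊(n,n)`, `LnKn = L_n(𝔎(n))`, `nℓ2 = n(ℓ2)`).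
Assume `K = μγ` for a constant `μ`.  Then
`Q_c n^c = −2 𝕊(n,n) + 2 L_n(𝔎(n) − μ) + (𝔎(n) − μ) tr_P U`. -/
theorem null_Q_contraction {ι : Type*} [Fintype ι]
    (Q Kf LnKf r s ℓ n : ι → ℝ)
    (S P U Y γ K : ι → ι → ℝ) (DK Dγ : ι → ι → ι → ℝ)
    (κ μ LnKn nℓ2 trPU trPY Kn Snn : ℝ)
    (hPsymm : ∀ a b, P a b = P b a)
    (hUsymm : ∀ a b, U a b = U b a)
    (hγsymm : ∀ a b, γ a b = γ b a)
    (htrPU : trPU = ∑ a, ∑ b, P a b * U a b)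
    (htrPY : trPY = ∑ a, ∑ b, P a b * Y a b)
    (hKn : Kn = ∑ a, Kf a * n a)
    (hSnn : Snn = ∑ a, ∑ c, S a c * n a * n c)
    (hLnKn : LnKn = ∑ c, n c * LnKf c)
    (hγn : ∀ a, (∑ b, γ a b * n b) = 0)
    (hUn : ∀ a, (∑ b, U a b * n b) = 0)
    (hsn : (∑ a, s a * n a) = 0)
    (hrn : (∑ a, r a * n a) = -κ)
    (hℓn : (∑ a, ℓ a * n a) = 1)
    (hK : ∀ a b, K a b = μ * γ a b)
    (hDK : ∀ a b c, DK a b c = μ * Dγ a b c)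
    (hDγ : ∀ a b c, Dγ a b c = -(ℓ c * U a b) - ℓ b * U a c)
    (hQ : ∀ c, Q c =
      -2 * (∑ a, S a c * n a) + 2 * LnKf c
      - 2 * (∑ a, ∑ b, P a b * U c b * Kf a)
      + (2 * κ + trPU) * Kf c + 2 * Kn * (r c - s c)
      + (∑ a, ∑ b, P a b * DK a b c)
      - (1/2) * (∑ a, ∑ b, P a b * DK c a b)
      + (trPY - nℓ2) * (∑ d, K c d * n d)
      - 2 * (∑ b, ∑ d, P b d * (r b + s b) * K d c)) :
    (∑ c, Q c * n c) = -2 * Snn + 2 * LnKn + (Kn - μ) * trPU :=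
  null_Q_contraction_general Q Kf LnKf r s ℓ n S P U γ K DK Dγ κ μ LnKn nℓ2 trPU trPY Kn Snn hUsymm
    htrPU hKn hSnn hLnKn hγn hUn hsn hrn hℓn hK hDK hDγ hQ
end
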